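/- arXiv:1211.2897 — 6 statements merged into one kernel-verified Lean document; each statement's English description precedes it below -/
import Mathlib

section
/- Let K, M be integers with M ≥ 2, and for each i ∈ {1,...,K} let T_i ⊆ {1,...,K} with |T_i| ≤ M. For S ⊆ {1,...,K} define C_S = {i : T_i ∩ S ≠ ∅}. If there exists A ⊂ {1,...,K} with |A| = n < K and |C_A| ≤ (M−1)n + 1, then there exists B ⊆ {1,...,K} with |B| = n + 1 and |C_B| ≤ (M−1)(n+1) + 1. -/
/-!
Let `c = |C_A|`. The `K - c` messages outside `C_A` have their transmitters outside `A`, and each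
has at most `M` of them, so the `K - n` transmitters outside `A` carry on average at most
`M (K - c) / (K - n)` new messages. When `K - n ≥ 2`, this average lies below the slack
`(M-1)(n+1) + 2 - c`, so some transmitter `t ∉ A` can be added to `A`. When `K = n + 1`, take all
transmitters: they carry at most `K` messages.
-/

open Finset

section Carried

variable {ι α : Type*} [DecidableEq α]

/-- The paper's `C_S`, with messages ranging over `msgs`. -/
def carried (msgs : Finset ι) (T : ι → Finset α) (S : Finset α) : Finset ι :=
  {i ∈ msgs | (T i ∩ S).Nonempty}

lemma carried_subset (msgs : Finset ι) (T : ι → Finset α) (S : Finset α) :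
    carried msgs T S ⊆ msgs :=
  filter_subset _ _

lemma carried_insert [DecidableEq ι] (msgs : Finset ι) (T : ι → Finset α) (S : Finset α)
    (t : α) :
    carried msgs T (insert t S) =
      carried msgs T S ∪ {i ∈ msgs \ carried msgs T S | t ∈ T i} := by
  ext i
  simp only [carried, mem_union, mem_filter, mem_sdiff, Finset.Nonempty, mem_inter, mem_insert]
  grind

lemma card_carried_insert [DecidableEq ι] (msgs : Finset ι) (T : ι → Finset α) (S : Finset α)
    (t : α) :
    #(carried msgs T (insert t S)) =
      #(carried msgs T S) + #{i ∈ msgs \ carried msgs T S | t ∈ T i} := by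
  rw [carried_insert, card_union_of_disjoint]
  exact disjoint_sdiff.mono_right (filter_subset _ _)

lemma sum_card_filter_mem_le_mul (U : Finset ι) (R : Finset α) (T : ι → Finset α) {M : ℕ}
    (hT : ∀ i ∈ U, #(T i) ≤ M) :
    ∑ t ∈ R, #{i ∈ U | t ∈ T i} ≤ M * #U :=
  calc ∑ t ∈ R, #{i ∈ U | t ∈ T i} = ∑ i ∈ U, #{t ∈ R | t ∈ T i} :=
        sum_card_bipartiteAbove_eq_sum_card_bipartiteBelow (fun t i => t ∈ T i)
    _ ≤ ∑ _i ∈ U, M :=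
        sum_le_sum fun i hi => (card_le_card fun _ ht => (mem_filter.1 ht).2).trans (hT i hi)
    _ = M * #U := by rw [sum_const, smul_eq_mul, mul_comm]

end Carried

/-- The averaging step: `M (m - c)` bounds the new messages summed over the `r - n` transmitters
outside `A`. -/
lemma mul_sub_lt_mul_slack {M n c m r : ℕ} (hM : 2 ≤ M) (hr : n + 2 ≤ r) (hm : m ≤ r)
    (hcm : c ≤ m) (hc : c ≤ (M - 1) * n + 1) :
    M * (m - c) < (r - n) * ((M - 1) * (n + 1) + 2 - c) := by
  obtain ⟨M, rfl⟩ : ∃ L, M = L + 1 := ⟨M - 1, by omega⟩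
  obtain ⟨d, rfl⟩ : ∃ d, r = n + d := ⟨r - n, by omega⟩
  simp only [Nat.add_sub_cancel, Nat.add_sub_cancel_left] at *
  zify [hcm, show c ≤ M * (n + 1) + 2 by nlinarith] at *
  rcases le_or_gt d (M + 1) with hdM | hdM <;> nlinarith

lemma exists_card_carried_insert_le {ι α : Type*} [DecidableEq ι] [DecidableEq α]
    {msgs : Finset ι} {R S : Finset α} {T : ι → Finset α} {M : ℕ} (hM : 2 ≤ M)
    (hT : ∀ i ∈ msgs, #(T i) ≤ M) (hmR : #msgs ≤ #R) (hSR : S ⊆ R) (hS : #S + 2 ≤ #R)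
    (hC : #(carried msgs T S) ≤ (M - 1) * #S + 1) :
    ∃ t ∈ R \ S, #(carried msgs T (insert t S)) ≤ (M - 1) * (#S + 1) + 1 := by
  set c := #(carried msgs T S)
  have hsum : ∑ t ∈ R \ S, #{i ∈ msgs \ carried msgs T S | t ∈ T i} <
      ∑ _t ∈ R \ S, ((M - 1) * (#S + 1) + 2 - c) := by
    rw [sum_const, card_sdiff_of_subset hSR, smul_eq_mul]
    calc _ ≤ M * #(msgs \ carried msgs T S) :=
          sum_card_filter_mem_le_mul _ _ T fun i hi => hT i (mem_sdiff.1 hi).1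
      _ = M * (#msgs - c) := by rw [card_sdiff_of_subset (carried_subset _ _ _)]
      _ < _ := mul_sub_lt_mul_slack hM hS hmR (card_le_card (carried_subset _ _ _)) hC
  obtain ⟨t, ht, hlt⟩ := exists_lt_of_sum_lt hsum
  refine ⟨t, ht, ?_⟩
  rw [card_carried_insert, Nat.mul_succ]
  rw [Nat.mul_succ] at hlt
  omega

theorem stmt_1_general (K M n : ℕ) (hM : 2 ≤ M)
    (T : ℕ → Finset ℕ)
    (hT : ∀ i ∈ Finset.Icc 1 K, T i ⊆ Finset.Icc 1 K ∧ (T i).card ≤ M)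
    (A : Finset ℕ) (hA : A ⊂ Finset.Icc 1 K) (hAn : A.card = n)
    (hCA : ((Finset.Icc 1 K).filter (fun i => ((T i) ∩ A).Nonempty)).card ≤ (M - 1) * n + 1) :
    ∃ B ⊆ Finset.Icc 1 K, B.card = n + 1 ∧
      ((Finset.Icc 1 K).filter (fun i => ((T i) ∩ B).Nonempty)).card ≤ (M - 1) * (n + 1) + 1 := by
  subst hAn
  have hAK : #A < K := by simpa using card_lt_card hA
  obtain hK | hK := (show #A + 1 ≤ K from hAK).eq_or_lt
  · refine ⟨Icc 1 K, subset_rfl, by simp [hK], ?_⟩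
    calc _ ≤ K := (card_filter_le _ _).trans (by simp)
      _ ≤ (M - 1) * (#A + 1) + 1 := by
        rw [← hK]; exact Nat.le_add_right_of_le (Nat.le_mul_of_pos_left _ (by omega))
  · obtain ⟨t, ht, hcard⟩ := exists_card_carried_insert_le hM (fun i hi => (hT i hi).2) le_rfl
      hA.subset (by simp; omega) hCA
    exact ⟨insert t A, insert_subset (mem_sdiff.1 ht).1 hA.subset,
      card_insert_of_notMem (mem_sdiff.1 ht).2, hcard⟩

/-- Induction step: a set of `n` transmitters carrying at most `(M-1)n+1` messages can be
grown to `n+1` transmitters carrying at most `(M-1)(n+1)+1` messages. -/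
theorem stmt_1 (K M n : ℕ) (hM : 2 ≤ M)
    (T : ℕ → Finset ℕ)
    (hT : ∀ i ∈ Finset.Icc 1 K, T i ⊆ Finset.Icc 1 K ∧ (T i).card ≤ M)
    (A : Finset ℕ) (hA : A ⊂ Finset.Icc 1 K) (hAn : A.card = n) (hn : n < K)
    (hCA : ((Finset.Icc 1 K).filter (fun i => ((T i) ∩ A).Nonempty)).card ≤ (M - 1) * n + 1) :
    ∃ B ⊆ Finset.Icc 1 K, B.card = n + 1 ∧
      ((Finset.Icc 1 K).filter (fun i => ((T i) ∩ B).Nonempty)).card ≤ (M - 1) * (n + 1) + 1 :=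
  stmt_1_general K M n hM T hT A hA hAn hCA
end

section
/- Let M ≥ 2 and let K be a positive integer such that (K−1)/M is an integer. For each i ∈ {1,...,K} let T_i ⊆ {1,...,K} with |T_i| ≤ M, and define C_S = {i : T_i ∩ S ≠ ∅} for S ⊆ {1,...,K}. Then there exists a set S ⊆ {1,...,K} with |S| = (K−1)/M and |C_S| ≤ (K(M−1)+1)/M = K − |S|. -/
/-!
Choose the transmitters greedily. If `W` is a set of receivers not yet touched by `S` and
`|W| < |X \ S|`, double counting gives `∑_{j ∈ X \ S} #{i ∈ W | j ∈ T i} ≤ M |W| < M |X \ S|`, so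
some new transmitter `j` touches at most `M - 1` receivers of `W`. Taking `W` of size
`min(#untouched, |X \ S| - 1)`, every step loses at most `M - 1` untouched receivers, except
possibly `M` at the first one; after `n = (K - 1) / M` steps at least `K - 1 - (M - 1) n = n`
receivers remain untouched.
-/

namespace Finset

variable {ι α : Type*} [DecidableEq α]

lemma exists_card_filter_mem_lt {W : Finset ι} {A : Finset α} {T : ι → Finset α} {M : ℕ}
    (hT : ∀ i ∈ W, #(T i) ≤ M) (hM : 0 < M) (hWA : #W < #A) :
    ∃ j ∈ A, #{i ∈ W | j ∈ T i} < M := by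
  by_contra! h
  have hcount := card_mul_le_card_mul (fun j i => j ∈ T i) h
    fun i hi => (card_le_card fun _ hj => (mem_filter.mp hj).2).trans (hT i hi)
  exact absurd (Nat.le_of_mul_le_mul_right hcount hM) (not_le.mpr hWA)

/-- Its complement in `R` is the set `C_S` of the paper. -/
def avoiding (R : Finset ι) (T : ι → Finset α) (S : Finset α) : Finset ι :=
  {i ∈ R | Disjoint (T i) S}

@[simp]
lemma avoiding_empty (R : Finset ι) (T : ι → Finset α) : avoiding R T ∅ = R :=
  filter_true_of_mem fun _ _ => disjoint_empty_right _

lemma filter_notMem_subset_avoiding_insert {R W : Finset ι} {T : ι → Finset α} {S : Finset α}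
    (hW : W ⊆ avoiding R T S) (j : α) : {i ∈ W | j ∉ T i} ⊆ avoiding R T (insert j S) := by
  intro i hi
  obtain ⟨hiW, hj⟩ := mem_filter.mp hi
  obtain ⟨hiR, hdisj⟩ := mem_filter.mp (hW hiW)
  exact mem_filter.mpr ⟨hiR, disjoint_insert_right.mpr ⟨hj, hdisj⟩⟩

lemma card_filter_inter_nonempty_add_card_avoiding (R : Finset ι) (T : ι → Finset α)
    (S : Finset α) : #{i ∈ R | (T i ∩ S).Nonempty} + #(avoiding R T S) = #R := by
  simpa only [avoiding, not_nonempty_iff_eq_empty, ← disjoint_iff_inter_eq_empty] using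
    card_filter_add_card_filter_not (s := R) (fun i => (T i ∩ S).Nonempty)

lemma exists_lt_card_avoiding_insert_add {R : Finset ι} {X S : Finset α} {T : ι → Finset α}
    {M w : ℕ} (hT : ∀ i ∈ R, #(T i) ≤ M) (hM : 0 < M) (hw : w ≤ #(avoiding R T S))
    (hwX : w < #(X \ S)) : ∃ j ∈ X \ S, w < #(avoiding R T (insert j S)) + M := by
  obtain ⟨W, hW, rfl⟩ := exists_subset_card_eq hw
  obtain ⟨j, hj, hdeg⟩ := exists_card_filter_mem_lt
    (fun i hi => hT i (mem_of_mem_filter i (hW hi))) hM hwX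
  refine ⟨j, hj, ?_⟩
  have hsplit := card_filter_add_card_filter_not (s := W) (fun i => j ∈ T i)
  have hkept := card_le_card (filter_notMem_subset_avoiding_insert hW j)
  omega

theorem exists_subset_card_eq_card_le_card_avoiding_add {R : Finset ι} {X : Finset α}
    {T : ι → Finset α} {M : ℕ} (hRX : #R ≤ #X) (hT : ∀ i ∈ R, #(T i) ≤ M) (hM : 2 ≤ M) :
    ∀ t ≤ #X, ∃ S ⊆ X, #S = t ∧ #R ≤ #(avoiding R T S) + (M - 1) * t + 1
  | 0, _ => ⟨∅, empty_subset X, card_empty, by simp⟩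
  | t + 1, ht => by
    obtain ⟨S, hSX, rfl, hS⟩ :=
      exists_subset_card_eq_card_le_card_avoiding_add hRX hT hM t (by omega)
    have hXS : #(X \ S) = #X - #S := card_sdiff_of_subset hSX
    obtain ⟨j, hj, hgain⟩ := exists_lt_card_avoiding_insert_add (X := X)
      (w := min #(avoiding R T S) (#X - #S - 1)) hT (by omega) (min_le_left _ _) (by omega)
    obtain ⟨hjX, hjS⟩ := mem_sdiff.mp hj
    refine ⟨insert j S, insert_subset hjX hSX, card_insert_of_notMem hjS, ?_⟩
    have hS_le : #S ≤ (M - 1) * #S := Nat.le_mul_of_pos_left _ (by omega)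
    rw [Nat.mul_succ]
    omega

end Finset

open Finset

/-- Main combinatorial existence result: there is a set `S` of `(K-1)/M` transmitters carrying
at most `(K(M-1)+1)/M = K - |S|` messages. -/
theorem stmt_5 (K M : ℕ) (hK : 0 < K) (hM : 2 ≤ M) (hdiv : M ∣ K - 1)
    (T : ℕ → Finset ℕ)
    (hT : ∀ i ∈ Finset.Icc 1 K, T i ⊆ Finset.Icc 1 K ∧ (T i).card ≤ M) :
    ∃ S ⊆ Finset.Icc 1 K, S.card = (K - 1) / M ∧
      ((Finset.Icc 1 K).filter (fun i => ((T i) ∩ S).Nonempty)).card ≤ (K * (M - 1) + 1) / M ∧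
      (K * (M - 1) + 1) / M = K - S.card := by
  obtain ⟨n, hn⟩ := hdiv
  obtain ⟨m, rfl⟩ : ∃ m, M = m + 1 := ⟨M - 1, by omega⟩
  have hKn : K = m * n + n + 1 := by rw [add_mul, one_mul] at hn; omega
  have hquot : (K * m + 1) / (m + 1) = K - n := by
    rw [show K - n = m * n + 1 by omega]
    exact Nat.div_eq_of_eq_mul_left (by omega) (by rw [hKn]; ring)
  obtain ⟨S, hSK, rfl, hS⟩ := exists_subset_card_eq_card_le_card_avoiding_add le_rfl
    (fun i hi => (hT i hi).2) hM n (by rw [Nat.card_Icc]; omega)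
  have hcover := card_filter_inter_nonempty_add_card_avoiding (Icc 1 K) T S
  simp only [Nat.card_Icc, Nat.add_sub_cancel] at hS hcover
  rw [Nat.add_sub_cancel, hquot]
  refine ⟨S, hSK, by rw [hn, Nat.mul_div_cancel_left _ (by omega)], by omega, rfl⟩
end

section
/- Suppose for each K-user channel with message assignment T_{i,K} (i ∈ {1,...,K}) satisfying the local cooperation constraint T_{i,K} ⊆ {i−r(K), ..., i+r(K)} with r(K) = o(K), the sum degrees of freedom η(K) satisfies η(K) ≤ max(|C_S|, K − |S|) for every S ⊆ {1,...,K}, where C_S = {i : T_{i,K} ∩ S ≠ ∅}. Then limsup_{K→∞} η(K)/K ≤ 1/2. -/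
/-!
Take `S = {1, …, ⌈K/2⌉}`. Every message meeting `S` is assigned to a transmitter at distance at
most `r(K)` from its index, so `|C_S| ≤ ⌈K/2⌉ + r(K)`, while `K - |S| ≤ ⌈K/2⌉`. Hence
`η(K)/K ≤ 1/2 + (1/2 + r(K))/K`, and the error term vanishes because `r(K) = o(K)`.
-/

open Filter Topology Finset

/-- The hypothesis `0 ≤ c` covers the junk value `limsup = 0` of a sequence unbounded below. -/
theorem Real.limsup_le_of_eventually_le_of_tendsto {α : Type*} {l : Filter α} [l.NeBot]
    {f g : α → ℝ} {c : ℝ} (hc : 0 ≤ c) (hfg : f ≤ᶠ[l] g) (hg : Tendsto g l (𝓝 c)) :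
    limsup f l ≤ c := by
  by_cases hf : IsCoboundedUnder (· ≤ ·) l f
  · calc limsup f l ≤ limsup g l := limsup_le_limsup hfg hf hg.isBoundedUnder_le
      _ = c := hg.limsup_eq
  · simpa [Real.limsup_of_not_isCoboundedUnder hf] using hc

theorem card_filter_inter_Icc_nonempty_le {K r : ℕ} {T : ℕ → Finset ℕ}
    (hloc : ∀ i ∈ Icc 1 K, T i ⊆ Icc (i - r) (i + r)) (m : ℕ) :
    #{i ∈ Icc 1 K | (T i ∩ Icc 1 m).Nonempty} ≤ m + r := by
  calc #{i ∈ Icc 1 K | (T i ∩ Icc 1 m).Nonempty} ≤ #(Icc 1 (m + r)) := by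
        refine card_le_card fun i hi ↦ ?_
        obtain ⟨hiK, j, hj⟩ := mem_filter.mp hi
        obtain ⟨hjT, hjS⟩ := mem_inter.mp hj
        have := mem_Icc.mp (hloc i hiK hjT)
        simp only [mem_Icc] at hiK hjS ⊢
        omega
    _ = m + r := by simp

theorem le_half_add_of_le_cut_bound {K r : ℕ} {T : ℕ → Finset ℕ} {η : ℝ}
    (hloc : ∀ i ∈ Icc 1 K, T i ⊆ Icc (i - r) (i + r))
    (hbound : ∀ S ⊆ Icc 1 K,
      η ≤ ((max #{i ∈ Icc 1 K | (T i ∩ S).Nonempty} (K - #S) : ℕ) : ℝ)) :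
    η ≤ ((K : ℝ) + 1) / 2 + r := by
  set m := (K + 1) / 2
  have hmax : max #{i ∈ Icc 1 K | (T i ∩ Icc 1 m).Nonempty} (K - #(Icc 1 m)) ≤ m + r := by
    refine max_le (card_filter_inter_Icc_nonempty_le hloc m) ?_
    simp only [Nat.card_Icc]
    omega
  have hm : (m : ℝ) ≤ ((K : ℝ) + 1) / 2 := by
    rw [le_div_iff₀ two_pos]
    exact_mod_cast Nat.div_mul_le_self (K + 1) 2
  calc η ≤ ((m + r : ℕ) : ℝ) :=
        (hbound (Icc 1 m) (Icc_subset_Icc le_rfl (by omega))).trans (by exact_mod_cast hmax)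
    _ ≤ ((K : ℝ) + 1) / 2 + r := by push_cast; linarith

/-- Local cooperation cannot achieve an asymptotic per user DoF greater than 1/2. -/
theorem stmt_6 (r : ℕ → ℕ)
    (hr : Tendsto (fun K => (r K : ℝ) / (K : ℝ)) atTop (nhds 0))
    (T : ℕ → ℕ → Finset ℕ)
    (hloc : ∀ K, ∀ i ∈ Finset.Icc 1 K, T K i ⊆ Finset.Icc (i - r K) (i + r K))
    (η : ℕ → ℝ)
    (hbound : ∀ K, ∀ S ⊆ Finset.Icc 1 K,
      η K ≤ ((max ((Finset.Icc 1 K).filter (fun i => ((T K i) ∩ S).Nonempty)).card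
                  (K - S.card) : ℕ) : ℝ)) :
    Filter.limsup (fun K => η K / (K : ℝ)) atTop ≤ 1 / 2 := by
  refine Real.limsup_le_of_eventually_le_of_tendsto (g := fun K ↦ 1 / 2 + 1 / 2 / K + r K / K)
    (by norm_num) ?_ ?_
  · filter_upwards [eventually_gt_atTop 0] with K hK
    have hK : (0 : ℝ) < K := by exact_mod_cast hK
    have hη := le_half_add_of_le_cut_bound (hloc K) (hbound K)
    rw [div_le_iff₀ hK]
    field_simp
    linarith
  · simpa using (tendsto_const_nhds.add (tendsto_const_div_atTop_nhds_zero_nat _)).add hr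
end

section
/- Let M ≥ 2 and suppose that for every K and every message assignment {T_i ⊆ [K] : |T_i| ≤ M}, the sum DoF satisfies η ≤ min over S ⊆ [K] of max(|C_S|, K − |S|), where C_S = {i : T_i ∩ S ≠ ∅}. Then for every K, the optimal sum DoF η(K, M) over all such assignments satisfies η(K, M) ≤ K(M−1)/M + M. -/
/-!
Call two users overlapping when their transmit sets meet. Inside an overlap component one can
pick users one at a time, each sharing a transmitter with those already picked, so `a` users of a
component cover at most `(M - 1) a + 1` transmitters. As all `K` users together cover at most `K`
transmitters, components covering more transmitters than they have users are outweighed by the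
others; taking the latter first yields `⌊K/M⌋` users `A` covering at most `(M - 1) ⌊K/M⌋ + 1`
transmitters. For `S` the transmitters outside this cover, only users outside `A` meet `S`, and
`K - |S|` is at most the size of the cover, so both terms of the outer bound are at most
`K(M - 1)/M + M`.
-/

open Finset Relation

lemma card_biUnion_union_le {ι α : Type*} [DecidableEq ι] [DecidableEq α] (T : ι → Finset α)
    (A B : Finset ι) : ((A ∪ B).biUnion T).card ≤ (A.biUnion T).card + (B.biUnion T).card := by
  rw [union_biUnion]
  exact card_union_le _ _

section OverlapComponent

variable {ι α : Type*} [DecidableEq α]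

def Overlapping (T : ι → Finset α) (I : Finset ι) (a b : ι) : Prop :=
  a ∈ I ∧ b ∈ I ∧ (T a ∩ T b).Nonempty

open Classical in
noncomputable def overlapComponent (T : ι → Finset α) (I : Finset ι) (i : ι) : Finset ι :=
  I.filter (ReflTransGen (Overlapping T I) i)

variable {T : ι → Finset α} {I : Finset ι} {i₀ : ι}

lemma mem_overlapComponent {j : ι} :
    j ∈ overlapComponent T I i₀ ↔ j ∈ I ∧ ReflTransGen (Overlapping T I) i₀ j := by
  classical
  simp only [overlapComponent, mem_filter]

lemma overlapComponent_subset : overlapComponent T I i₀ ⊆ I :=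
  fun _ hj => (mem_overlapComponent.1 hj).1

lemma mem_overlapComponent_self (h₀ : i₀ ∈ I) : i₀ ∈ overlapComponent T I i₀ :=
  mem_overlapComponent.2 ⟨h₀, .refl⟩

lemma mem_overlapComponent_of_inter_nonempty {j k : ι} (hj : j ∈ overlapComponent T I i₀)
    (hk : k ∈ I) (hjk : (T j ∩ T k).Nonempty) : k ∈ overlapComponent T I i₀ := by
  rw [mem_overlapComponent] at hj ⊢
  exact ⟨hk, hj.2.tail ⟨hj.1, hk, hjk⟩⟩

variable [DecidableEq ι]

lemma card_biUnion_eq_overlapComponent_add_sdiff :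
    (I.biUnion T).card = ((overlapComponent T I i₀).biUnion T).card
      + ((I \ overlapComponent T I i₀).biUnion T).card := by
  have hdisj : Disjoint ((overlapComponent T I i₀).biUnion T)
      ((I \ overlapComponent T I i₀).biUnion T) := by
    refine (disjoint_biUnion_left _ _ _).2 fun j hj =>
      (disjoint_biUnion_right _ _ _).2 fun k hk => ?_
    rw [mem_sdiff] at hk
    by_contra hjk
    exact hk.2 (mem_overlapComponent_of_inter_nonempty hj hk.1
      (not_disjoint_iff_nonempty_inter.1 hjk))
  conv_lhs => rw [← union_sdiff_of_subset (overlapComponent_subset (T := T) (I := I) (i₀ := i₀))]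
  rw [union_biUnion, card_union_of_disjoint hdisj]

lemma exists_mem_overlapComponent_inter_biUnion_nonempty {P : Finset ι} (h₀ : i₀ ∈ P)
    (hP : ¬overlapComponent T I i₀ ⊆ P) :
    ∃ j ∈ overlapComponent T I i₀, j ∉ P ∧ (T j ∩ P.biUnion T).Nonempty := by
  by_contra! hclosed
  refine hP fun i hi => ?_
  induction (mem_overlapComponent.1 hi).2 with
  | refl => exact h₀
  | @tail b c hb hbc hbP =>
    by_contra hcP
    obtain ⟨hbI, hcI, t, ht⟩ := hbc
    have hbC : b ∈ overlapComponent T I i₀ := mem_overlapComponent.2 ⟨hbI, hb⟩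
    have hcC := mem_overlapComponent_of_inter_nonempty hbC hcI ⟨t, ht⟩
    rw [mem_inter] at ht
    exact (nonempty_iff_ne_empty.1 ⟨t, mem_inter.2 ⟨ht.2, mem_biUnion.2 ⟨b, hbP hbC, ht.1⟩⟩⟩)
      (hclosed c hcC hcP)

lemma exists_subset_overlapComponent_card_biUnion_le {k : ℕ} (h₀ : i₀ ∈ I)
    (hT : ∀ i ∈ I, (T i).card ≤ k + 1) {a : ℕ} (ha : 0 < a)
    (haC : a ≤ (overlapComponent T I i₀).card) :
    ∃ P ⊆ overlapComponent T I i₀, P.card = a ∧ (P.biUnion T).card ≤ k * a + 1 := by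
  suffices ∃ P ⊆ overlapComponent T I i₀, i₀ ∈ P ∧ P.card = a ∧ (P.biUnion T).card ≤ k * a + 1 by
    obtain ⟨P, hPC, -, hP⟩ := this
    exact ⟨P, hPC, hP⟩
  induction a, ha using Nat.le_induction with
  | base =>
    refine ⟨{i₀}, singleton_subset_iff.2 (mem_overlapComponent_self h₀), mem_singleton_self _,
      card_singleton _, ?_⟩
    rw [singleton_biUnion]
    linarith [hT i₀ h₀]
  | succ a _ ih =>
    obtain ⟨P, hPC, h₀P, hPa, hPT⟩ := ih (by omega)
    have hCP : ¬overlapComponent T I i₀ ⊆ P := fun h => by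
      have := card_le_card h
      omega
    obtain ⟨j, hjC, hjP, hjP'⟩ := exists_mem_overlapComponent_inter_biUnion_nonempty h₀P hCP
    refine ⟨insert j P, insert_subset hjC hPC, mem_insert_of_mem h₀P,
      by rw [card_insert_of_notMem hjP, hPa], ?_⟩
    have hunion := card_union_add_card_inter (T j) (P.biUnion T)
    have hj := hT j (overlapComponent_subset hjC)
    have hshared := card_pos.2 hjP'
    rw [biUnion_insert, mul_add_one]
    omega

theorem exists_subset_card_eq_card_biUnion_le {k : ℕ} (hk : 0 < k) (I : Finset ι)
    (hT : ∀ i ∈ I, (T i).card ≤ k + 1) {s : ℕ} (hs : s ≤ I.card) :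
    ∃ A ⊆ I, A.card = s ∧ (A.biUnion T).card ≤ k * s + 1 + ((I.biUnion T).card - I.card) := by
  -- the truncated difference is the excess of covered elements over members, or `0`
  induction I using Finset.strongInduction generalizing s with
  | H I ih =>
  obtain rfl | hs₀ := Nat.eq_zero_or_pos s
  · exact ⟨∅, empty_subset _, card_empty, by simp⟩
  obtain ⟨i₀, h₀⟩ : I.Nonempty := card_pos.1 (by omega)
  set C := overlapComponent T I i₀
  set R := I \ C
  have hCI : C ⊆ I := overlapComponent_subset
  have hRI : R ⊂ I := sdiff_ssubset hCI ⟨i₀, mem_overlapComponent_self h₀⟩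
  have hRcard : R.card = I.card - C.card := card_sdiff_of_subset hCI
  have hCcard : C.card ≤ I.card := card_le_card hCI
  have hcost : (I.biUnion T).card = (C.biUnion T).card + (R.biUnion T).card :=
    card_biUnion_eq_overlapComponent_add_sdiff
  have hRT : ∀ i ∈ R, (T i).card ≤ k + 1 := fun i hi => hT i (sdiff_subset hi)
  -- A component covering no more elements than it has members is taken first (whole, if `s`
  -- exceeds its size); any other component is left for last.
  by_cases hgood : (C.biUnion T).card ≤ C.card
  · by_cases hsC : s ≤ C.card
    · obtain ⟨P, hPC, hPs, hPT⟩ :=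
        exists_subset_overlapComponent_card_biUnion_le h₀ hT hs₀ hsC
      exact ⟨P, hPC.trans hCI, hPs, by omega⟩
    · obtain ⟨A, hAR, hAs, hAT⟩ := ih R hRI hRT (s := s - C.card) (by omega)
      refine ⟨C ∪ A, union_subset hCI (hAR.trans sdiff_subset), ?_, ?_⟩
      · rw [card_union_of_disjoint (disjoint_sdiff.mono_right hAR)]
        omega
      · have := card_biUnion_union_le T C A
        have : k * s = k * (s - C.card) + k * C.card := by
          rw [← mul_add, Nat.sub_add_cancel (by omega)]
        have : C.card ≤ k * C.card := Nat.le_mul_of_pos_left _ hk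
        omega
  · by_cases hsR : s ≤ R.card
    · obtain ⟨A, hAR, hAs, hAT⟩ := ih R hRI hRT hsR
      exact ⟨A, hAR.trans hRI.subset, hAs, by omega⟩
    · obtain ⟨P, hPC, hPs, hPT⟩ := exists_subset_overlapComponent_card_biUnion_le h₀ hT
        (a := s - R.card) (by omega) (show s - R.card ≤ C.card by omega)
      refine ⟨R ∪ P, union_subset hRI.subset (hPC.trans hCI), ?_, ?_⟩
      · rw [card_union_of_disjoint (show Disjoint R P from disjoint_sdiff.symm.mono_right hPC)]
        omega
      · have := card_biUnion_union_le T R P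
        have : k * s = k * (s - R.card) + k * R.card := by
          rw [← mul_add, Nat.sub_add_cancel (by omega)]
        have : R.card ≤ k * R.card := Nat.le_mul_of_pos_left _ hk
        omega

end OverlapComponent

lemma filter_inter_sdiff_biUnion_nonempty_subset {ι α : Type*} [DecidableEq ι] [DecidableEq α]
    (T : ι → Finset α) (I A : Finset ι) (J : Finset α) :
    I.filter (fun i => (T i ∩ (J \ A.biUnion T)).Nonempty) ⊆ I \ A := by
  intro i hi
  rw [mem_filter] at hi
  obtain ⟨hiI, t, ht⟩ := hi
  rw [mem_inter, mem_sdiff] at ht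
  exact mem_sdiff.2 ⟨hiI, fun hiA => ht.2.2 (mem_biUnion.2 ⟨i, hiA, ht.1⟩)⟩

lemma natCast_sub_div_le (K : ℕ) {M : ℕ} (hM : 0 < M) :
    ((K - K / M : ℕ) : ℝ) ≤ K * (M - 1) / M + M := by
  have hfloor : (K : ℝ) / M < (K / M : ℕ) + 1 := by
    simpa only [Nat.floor_div_eq_div] using Nat.lt_floor_add_one ((K : ℝ) / M)
  have hM1 : (1 : ℝ) ≤ M := by exact_mod_cast hM
  rw [Nat.cast_sub (Nat.div_le_self K M), mul_sub_one, sub_div,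
    mul_div_cancel_right₀ _ (by positivity)]
  linarith

lemma natCast_mul_div_add_one_le (K : ℕ) {M : ℕ} (hM : 0 < M) :
    (((M - 1) * (K / M) + 1 : ℕ) : ℝ) ≤ K * (M - 1) / M + M := by
  have hM1 : (1 : ℝ) ≤ M := by exact_mod_cast hM
  have hdiv : ((K / M : ℕ) : ℝ) ≤ K / M := Nat.cast_div_le
  push_cast [Nat.cast_sub hM]
  rw [mul_div_right_comm]
  linarith [mul_le_mul_of_nonneg_left hdiv (sub_nonneg.2 hM1)]

/-- Under the DoF outer bound of Corollary 1, the sum DoF of any `K`-user fully connected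
channel with cooperation order `M` is at most `K(M-1)/M + M`. -/
theorem stmt_7 (M : ℕ) (hM : 2 ≤ M)
    (η : (K : ℕ) → (ℕ → Finset ℕ) → ℝ)
    (hbound : ∀ K : ℕ, ∀ T : ℕ → Finset ℕ,
      (∀ i ∈ Finset.Icc 1 K, T i ⊆ Finset.Icc 1 K ∧ (T i).card ≤ M) →
      ∀ S ⊆ Finset.Icc 1 K,
        η K T ≤ ((max ((Finset.Icc 1 K).filter (fun i => ((T i) ∩ S).Nonempty)).card
                      (K - S.card) : ℕ) : ℝ)) :
    ∀ K : ℕ, ∀ T : ℕ → Finset ℕ,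
      (∀ i ∈ Finset.Icc 1 K, T i ⊆ Finset.Icc 1 K ∧ (T i).card ≤ M) →
      η K T ≤ (K : ℝ) * ((M : ℝ) - 1) / (M : ℝ) + (M : ℝ) := by
  intro K T hT
  have hIcard : (Icc 1 K).card = K := by simp
  have hcover : ((Icc 1 K).biUnion T).card ≤ (Icc 1 K).card :=
    card_le_card (biUnion_subset.2 fun i hi => (hT i hi).1)
  obtain ⟨A, hAI, hAcard, hAT⟩ :=
    exists_subset_card_eq_card_biUnion_le (k := M - 1) (by omega) (Icc 1 K)
      (fun i hi => (hT i hi).2.trans (by omega)) (s := K / M)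
      (hIcard.symm ▸ Nat.div_le_self K M)
  refine (hbound K T hT (Icc 1 K \ A.biUnion T) sdiff_subset).trans ?_
  have hC : ((Icc 1 K).filter (fun i => (T i ∩ (Icc 1 K \ A.biUnion T)).Nonempty)).card
      ≤ K - K / M := by
    simpa only [card_sdiff_of_subset hAI, hIcard, hAcard] using
      card_le_card (filter_inter_sdiff_biUnion_nonempty_subset T (Icc 1 K) A (Icc 1 K))
  have hS : K - (Icc 1 K \ A.biUnion T).card ≤ (M - 1) * (K / M) + 1 := by
    have := le_card_sdiff (A.biUnion T) (Icc 1 K)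
    omega
  rw [Nat.cast_max]
  exact max_le ((Nat.cast_le.2 hC).trans (natCast_sub_div_le K (by omega)))
    ((Nat.cast_le.2 hS).trans (natCast_mul_div_add_one_le K (by omega)))
end

section
/- Let K, M, L be positive integers with K divisible by 2M+L. Partition {1,...,K} into clusters of 2M+L consecutive indices. Within the cluster {1,...,2M+L}, define S_1 = {1,...,M} and S_2 = {L+M+1,...,L+2M}, and message assignments T_i = {i, i+1, ..., M} for i ∈ S_1 and T_i = {i−L, i−L−1, ..., M+1} for i ∈ S_2. Then (a) every T_i has |T_i| ≤ M; (b) for every i ∈ S_1, no element of T_i is connected to a receiver in S_2, i.e., for all j ∈ T_i and all k ∈ S_2, k ∉ {j, j+1, ..., j+L}; and (c) for every i ∈ S_2, no element of T_i is connected to a receiver in S_1, i.e., for all j ∈ T_i and all k ∈ S_1, k ∉ {j, j+1, ..., j+L}. -/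
theorem stmt_8_general (M L : ℕ) :
    (∀ i ∈ Finset.Icc 1 M, (Finset.Icc i M).card ≤ M) ∧
    (∀ i ∈ Finset.Icc (L + M + 1) (L + 2 * M), (Finset.Icc (M + 1) (i - L)).card ≤ M) ∧
    (∀ i ∈ Finset.Icc 1 M, ∀ j ∈ Finset.Icc i M,
      ∀ k ∈ Finset.Icc (L + M + 1) (L + 2 * M), k ∉ Finset.Icc j (j + L)) ∧
    (∀ i ∈ Finset.Icc (L + M + 1) (L + 2 * M), ∀ j ∈ Finset.Icc (M + 1) (i - L),
      ∀ k ∈ Finset.Icc 1 M, k ∉ Finset.Icc j (j + L)) := by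
  refine ⟨fun i hi => ?_, fun i hi => ?_, fun i hi j hj k hk => ?_, fun i hi j hj k hk => ?_⟩ <;>
    simp only [Finset.mem_Icc, Nat.card_Icc] at * <;> omega

/-- Properties of the message assignment used in the zero-forcing scheme achieving per user DoF
`2M/(2M+L)` within a cluster of `2M+L` users: `S₁ = {1,...,M}` with `T i = {i,...,M}`, and
`S₂ = {L+M+1,...,L+2M}` with `T i = {M+1,...,i-L}`; transmitter `j` is connected to
receivers `{j,...,j+L}`. -/
theorem stmt_8 (K M L : ℕ) (hK : 0 < K) (hM : 0 < M) (hL : 0 < L)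
    (hdiv : (2 * M + L) ∣ K) :
    (∀ i ∈ Finset.Icc 1 M, (Finset.Icc i M).card ≤ M) ∧
    (∀ i ∈ Finset.Icc (L + M + 1) (L + 2 * M), (Finset.Icc (M + 1) (i - L)).card ≤ M) ∧
    (∀ i ∈ Finset.Icc 1 M, ∀ j ∈ Finset.Icc i M,
      ∀ k ∈ Finset.Icc (L + M + 1) (L + 2 * M), k ∉ Finset.Icc j (j + L)) ∧
    (∀ i ∈ Finset.Icc (L + M + 1) (L + 2 * M), ∀ j ∈ Finset.Icc (M + 1) (i - L),
      ∀ k ∈ Finset.Icc 1 M, k ∉ Finset.Icc j (j + L)) :=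
  stmt_8_general M L
end

section
/- Let K be a positive integer divisible by 3, and consider users 1,...,K with transmitter j connected to receivers j and j+1 (Wyner's asymmetric model, L = 1). Define the assignment: for each block {3m+1, 3m+2, 3m+3}, message W_{3m+1} is at transmitter 3m+1, message W_{3m+3} is at transmitter 3m+2, transmitter 3m+3 is silent, and message W_{3m+2} is not transmitted. Then every transmitted message W_i is received at receiver i with no interference from any other transmitted message: formally, for any two distinct transmitted messages W_i, W_j with transmitters t_i, t_j respectively, receiver i ∉ {t_j, t_j + 1}. -/
theorem stmt_14_general (K : ℕ) :
    ∀ i ∈ Finset.Icc 1 K, ∀ j ∈ Finset.Icc 1 K,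
      i % 3 ≠ 2 → j % 3 ≠ 2 → i ≠ j →
      i ∉ ({(if j % 3 = 1 then j else j - 1),
            (if j % 3 = 1 then j else j - 1) + 1} : Finset ℕ) := by
  intro i _ j hj hi3 hj3 hij
  rw [Finset.mem_Icc] at hj
  rw [Finset.mem_insert, Finset.mem_singleton]
  split <;> omega

/-- In Wyner's asymmetric model (`L = 1`, transmitter `j` connected to receivers `{j, j+1}`),
the assignment where `W_{3m+1}` is at transmitter `3m+1`, `W_{3m+3}` is at transmitter `3m+2`,
transmitter `3m+3` is silent and `W_{3m+2}` is not transmitted, gives every transmitted message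
an interference-free link: receiver `i` is not connected to the transmitter of any other
transmitted message `W_j`. -/
theorem stmt_14 (K : ℕ) (hK : 0 < K) (h3 : 3 ∣ K) :
    ∀ i ∈ Finset.Icc 1 K, ∀ j ∈ Finset.Icc 1 K,
      i % 3 ≠ 2 → j % 3 ≠ 2 → i ≠ j →
      i ∉ ({(if j % 3 = 1 then j else j - 1),
            (if j % 3 = 1 then j else j - 1) + 1} : Finset ℕ) :=
  stmt_14_general K
end
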